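/- arXiv:1605.00845 — 2 statements merged into one kernel-verified Lean document; each statement's English description precedes it below -/
import Mathlib

section
/- Let C be a countable small preadditive category and let M be a countable right C-module such that Hom_C(M, -) preserves countable direct sums. Then M is finitely generated. -/
open CategoryTheory Limits Opposite

/-- A right `C`-module `M` is finitely generated if it admits a (pointwise) surjection
from a finite direct sum of representable functors `C(-, cᵢ)`. -/
def ModuleFG (C : Type) [SmallCategory C] [Preadditive C]
    (M : Cᵒᵖ ⥤ AddCommGrpCat) : Prop :=
  ∃ (ι : Type) (_ : Fintype ι) (c : ι → C)
    (p : (∐ fun i => preadditiveYoneda.obj (c i)) ⟶ M),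
    ∀ d : Cᵒᵖ, Function.Surjective (p.app d)

/-- The canonical comparison map `⨁ᵢ Hom(M, Vᵢ) →+ Hom(M, ⊕ᵢ Vᵢ)`. -/
noncomputable def homCoproductComparison {C : Type} [SmallCategory C] [Preadditive C]
    {ι : Type} [DecidableEq ι] (M : Cᵒᵖ ⥤ AddCommGrpCat) (V : ι → (Cᵒᵖ ⥤ AddCommGrpCat)) :
    DirectSum ι (fun i => M ⟶ V i) →+ (M ⟶ ∐ V) :=
  DirectSum.toAddMonoid fun i =>
    AddMonoidHom.mk' (fun f => f ≫ Sigma.ι V i) (fun _ _ => Preadditive.add_comp _ _ _ _ _ _)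

/-! Enumerate the elements of `M` as `x₀, x₁, …` and let `Mₙ` be the submodule generated by the
first `n` of them. Every element of `M` lies in almost all `Mₙ`, so the quotient maps
`M ⟶ M/Mₙ` add up to a morphism `M ⟶ ⨁ₙ M/Mₙ`. Lifting it along the comparison map, it factors
through finitely many summands, so the quotient map `M ⟶ M/M_N` vanishes for some `N`, that is,
`M` is generated by `x₀, …, x_{N-1}`. -/

namespace CategoryTheory

lemma Functor.additive_of_epi_app {C D : Type*} [Category C] [Category D] [Preadditive C]
    [Preadditive D] {F G : C ⥤ D} [F.Additive] (π : F ⟶ G) [∀ X, Epi (π.app X)] :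
    G.Additive where
  map_add {X _ f g} := by
    rw [← cancel_epi (π.app X), Preadditive.comp_add, ← π.naturality, ← π.naturality,
      ← π.naturality, F.map_add, Preadditive.add_comp]

namespace Limits

lemma cokernel_π_app_eq_zero_of_mem_range {C : Type} [SmallCategory C]
    {F G : C ⥤ AddCommGrpCat} (p : F ⟶ G) {c : C} {m : G.obj c}
    (hm : m ∈ Set.range (p.app c)) : (cokernel.π p).app c m = 0 := by
  obtain ⟨y, rfl⟩ := hm
  rw [← NatTrans.comp_app_apply, cokernel.condition]
  rfl

section FiniteSupport

variable {C : Type} [SmallCategory C] {ι : Type} {M : C ⥤ AddCommGrpCat}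
  {W : ι → C ⥤ AddCommGrpCat} (f : ∀ i, M ⟶ W i)

lemma Sigma.finite_support_ι_app
    (hf : ∀ c (m : M.obj c), {i | (f i).app c m ≠ 0}.Finite) (c : C) (m : M.obj c) :
    (Function.support fun i => (Sigma.ι W i).app c ((f i).app c m)).Finite :=
  (hf c m).subset fun i hi h => hi (by simp only [h, map_zero])

noncomputable def Sigma.liftOfFiniteSupport
    (hf : ∀ c (m : M.obj c), {i | (f i).app c m ≠ 0}.Finite) : M ⟶ ∐ W where
  app c := AddCommGrpCat.ofHom
    { toFun := fun m => ∑ᶠ i, (Sigma.ι W i).app c ((f i).app c m)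
      map_zero' := by simp
      map_add' := fun a b => by
        simp only [map_add]
        exact finsum_add_distrib (Sigma.finite_support_ι_app f hf c a)
          (Sigma.finite_support_ι_app f hf c b) }
  naturality c c' φ := by
    ext m
    change ∑ᶠ i, (Sigma.ι W i).app c' ((f i).app c' (M.map φ m)) =
      (∐ W).map φ (∑ᶠ i, (Sigma.ι W i).app c ((f i).app c m))
    rw [map_finsum _ (Sigma.finite_support_ι_app f hf c m)]
    refine finsum_congr fun i => ?_
    rw [NatTrans.naturality_apply, NatTrans.naturality_apply]

lemma Sigma.liftOfFiniteSupport_π [DecidableEq ι]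
    (hf : ∀ c (m : M.obj c), {i | (f i).app c m ≠ 0}.Finite) (j : ι) :
    Sigma.liftOfFiniteSupport f hf ≫ Sigma.π W j = f j := by
  ext c m
  change (Sigma.π W j).app c (∑ᶠ i, (Sigma.ι W i).app c ((f i).app c m)) = (f j).app c m
  rw [map_finsum _ (Sigma.finite_support_ι_app f hf c m), finsum_eq_single _ j]
  · rw [← NatTrans.comp_app_apply, Sigma.ι_π_eq_id]
    rfl
  · intro i hi
    rw [← NatTrans.comp_app_apply, Sigma.ι_π_of_ne _ hi]
    rfl

end FiniteSupport

end Limits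

end CategoryTheory

lemma homCoproductComparison_comp_π {C : Type} [SmallCategory C] [Preadditive C] {ι : Type}
    [DecidableEq ι] (M : Cᵒᵖ ⥤ AddCommGrpCat) (V : ι → Cᵒᵖ ⥤ AddCommGrpCat)
    (g : DirectSum ι fun i => M ⟶ V i) (j : ι) :
    homCoproductComparison M V g ≫ Sigma.π V j = g j := by
  induction g using DirectSum.induction_on with
  | zero => simp
  | of i f =>
    rw [homCoproductComparison, DirectSum.toAddMonoid_of]
    by_cases h : i = j
    · subst h
      simp
    · simp [Sigma.ι_π_of_ne _ h, DirectSum.of_eq_of_ne _ _ _ (Ne.symm h)]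
  | add g₁ g₂ h₁ h₂ => simp [Preadditive.add_comp, h₁, h₂]

section Generators

variable {C : Type} [SmallCategory C] [Preadditive C] (M : Cᵒᵖ ⥤ AddCommGrpCat) [M.Additive]

def elementHom {c : C} (m : M.obj (op c)) : preadditiveYoneda.obj c ⟶ M where
  app d := AddCommGrpCat.ofHom (
    { toFun := fun φ => M.map φ.op m
      map_zero' := by simp
      map_add' := fun φ ψ => by simp [M.map_add] } : (unop d ⟶ c) →+ M.obj d)
  naturality d d' φ := by
    ext (ψ : unop d ⟶ c)
    change M.map (φ.unop ≫ ψ).op m = M.map φ (M.map ψ.op m)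
    simp

lemma elementHom_app_id {c : C} (m : M.obj (op c)) :
    (elementHom M m).app (op c) (𝟙 c) = m :=
  show M.map (𝟙 c).op m = m by simp

noncomputable def generatorsHom {ι : Type} (x : ι → Σ c : C, M.obj (op c)) :
    (∐ fun i => preadditiveYoneda.obj (x i).1) ⟶ M :=
  Sigma.desc fun i => elementHom M (x i).2

lemma mem_range_generatorsHom_app {ι : Type} (x : ι → Σ c : C, M.obj (op c)) (i : ι) :
    (x i).2 ∈ Set.range ((generatorsHom M x).app (op (x i).1)) :=
  ⟨_, (NatTrans.comp_app_apply (Sigma.ι _ i) (generatorsHom M x) _ (𝟙 (x i).1)).symm.trans <| by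
    rw [generatorsHom, Sigma.ι_desc]
    exact elementHom_app_id M (x i).2⟩

lemma finite_setOf_cokernel_π_generatorsHom_app_ne_zero {x : ℕ → Σ c : C, M.obj (op c)}
    (hx : Function.Surjective x) (d : Cᵒᵖ) (m : M.obj d) :
    {n | (cokernel.π (generatorsHom M fun k : Fin n => x k)).app d m ≠ 0}.Finite := by
  obtain ⟨k, hk⟩ := hx ⟨unop d, m⟩
  refine (Set.finite_Iic k).subset fun n hn => Set.mem_Iic.2 <| not_lt.1 fun hkn => hn ?_
  have hm := mem_range_generatorsHom_app M (fun k : Fin n => x k) ⟨k, hkn⟩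
  rw [hk] at hm
  exact cokernel_π_app_eq_zero_of_mem_range _ hm

omit [M.Additive] in
lemma moduleFG_of_cokernel_π_eq_zero {ι : Type} [Fintype ι] {c : ι → C}
    (p : (∐ fun i => preadditiveYoneda.obj (c i)) ⟶ M) (h : cokernel.π p = 0) :
    ModuleFG C M :=
  have := Abelian.epi_of_cokernel_π_eq_zero p h
  ⟨ι, inferInstance, c, p, fun _ => (AddCommGrpCat.epi_iff_surjective _).1 inferInstance⟩

end Generators

/-- Let `C` be a countable small preadditive category and `M` a countable right
`C`-module such that `Hom_C(M, -)` preserves countable direct sums.  Then `M` is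
finitely generated. -/
theorem fg_of_hom_preserves_countable_direct_sums
    (C : Type) [SmallCategory C] [Preadditive C]
    [Countable C] [∀ c d : C, Countable (c ⟶ d)]
    (M : Cᵒᵖ ⥤ AddCommGrpCat) [M.Additive] [∀ d : Cᵒᵖ, Countable (M.obj d)]
    (hM : ∀ (ι : Type) [Countable ι] [DecidableEq ι]
      (V : ι → (Cᵒᵖ ⥤ AddCommGrpCat)) [∀ i, (V i).Additive],
      Function.Bijective (homCoproductComparison M V)) :
    ModuleFG C M := by
  rcases isEmpty_or_nonempty C with hC | hC
  · exact ⟨PEmpty, inferInstance, PEmpty.elim, 0, fun d => isEmptyElim d.unop⟩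
  have : Nonempty (Σ c : C, M.obj (op c)) := ⟨⟨hC.some, 0⟩⟩
  obtain ⟨x, hx⟩ := exists_surjective_nat (Σ c : C, M.obj (op c))
  let p (n : ℕ) := generatorsHom M fun k : Fin n => x k
  have : ∀ n, (cokernel (p n)).Additive := fun n => Functor.additive_of_epi_app (cokernel.π (p n))
  have hfin := finite_setOf_cokernel_π_generatorsHom_app_ne_zero M hx
  obtain ⟨g, hg⟩ := (hM ℕ _).2 (Sigma.liftOfFiniteSupport _ hfin)
  obtain ⟨N, hN⟩ : ∃ N, g N = 0 := by
    classical
    exact (Infinite.exists_notMem_finset g.support).imp fun _ => DFinsupp.notMem_support_iff.1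
  apply moduleFG_of_cokernel_π_eq_zero M (p N)
  rw [← Sigma.liftOfFiniteSupport_π _ hfin N, ← hg, homCoproductComparison_comp_π, hN]
end

section
/- Let T be a triangulated category with countable coproducts, let S be a compact object of T, and let X^0 → X^1 → X^2 → ... be a sequence of morphisms in T with homotopy colimit hocolim_n X^n (defined by the triangle ⊕_n X^n → ⊕_n X^n → hocolim_n X^n → Σ⊕_n X^n, where the first map is 1 − shift). Then the canonical map colim_n Hom_T(S, X^n) → Hom_T(S, hocolim_n X^n) is an isomorphism. -/
open CategoryTheory Limits Pretriangulated

universe v u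

/-!
Compactness identifies `Hom(S, ∐ Xⁿ)` with `⨁ₙ Hom(S, Xⁿ)`, on which `1 - Sh` becomes
`x ↦ x - Sh x`. Solving `x - Sh x = y` degree by degree shows that this map is injective, and
that `ψ : S ⟶ Xⁿ` lies in its image only if `ψ` dies in some `X^{n+m}`, because `x` has finite
support. The shift functor commutes with coproducts, so `Σ(1 - Sh)` is injective on `Hom(S, -)`
too, and the exact sequence of the triangle lifts every `S ⟶ H` to `∐ Xⁿ`, that is, to a finite
sum of maps `S ⟶ Xᵏ`. Since `g` coequalises `1` and `Sh`, these can be pushed to one `Xⁿ`.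
-/

/-- The canonical comparison map `⨁ᵢ Hom(S, Yᵢ) →+ Hom(S, ∐ᵢ Yᵢ)` in a preadditive
category with coproducts. -/
noncomputable def coproductComparisonHom {T : Type u} [Category.{v} T] [Preadditive T]
    {ι : Type} [DecidableEq ι] (S : T) (Y : ι → T) [HasCoproduct Y] :
    DirectSum ι (fun i => S ⟶ Y i) →+ (S ⟶ ∐ Y) :=
  DirectSum.toAddMonoid fun i =>
    AddMonoidHom.mk' (fun f => f ≫ Sigma.ι Y i) (fun _ _ => Preadditive.add_comp _ _ _ _ _ _)

/-- `S` is compact if `Hom(S, -)` preserves countable coproducts. -/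
def IsCompactObject {T : Type u} [Category.{v} T] [Preadditive T] [HasCoproducts.{0} T]
    (S : T) : Prop :=
  ∀ (ι : Type) [DecidableEq ι] [Countable ι] (Y : ι → T),
    Function.Bijective (coproductComparisonHom S Y)

/-- The composite `X n ⟶ X (n + m)` of a sequence of morphisms. -/
def chainCompose {T : Type u} [Category.{v} T] (X : ℕ → T) (f : ∀ n, X n ⟶ X (n + 1)) :
    ∀ n m, X n ⟶ X (n + m)
  | _, 0 => 𝟙 _
  | n, (m + 1) => chainCompose X f n m ≫ f (n + m)

section SequenceShift

variable {T : Type u} [Category.{v} T]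

noncomputable def sigmaShift {Y : ℕ → T} [HasCoproduct Y] (u : ∀ n, Y n ⟶ Y (n + 1)) :
    ∐ Y ⟶ ∐ Y :=
  Sigma.desc fun n => u n ≫ Sigma.ι Y (n + 1)

lemma ι_comp_eq_of_sigmaShift_comp {Y : ℕ → T} [HasCoproduct Y] (u : ∀ n, Y n ⟶ Y (n + 1))
    {H : T} {g : ∐ Y ⟶ H} (hg : sigmaShift u ≫ g = g) (n : ℕ) :
    Sigma.ι Y n ≫ g = u n ≫ Sigma.ι Y (n + 1) ≫ g := by
  conv_lhs => rw [← hg]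
  simp [sigmaShift]

lemma sigmaShift_comp_sigmaComparison {C : Type*} [Category C] {Y : ℕ → C} [HasCoproduct Y]
    (u : ∀ n, Y n ⟶ Y (n + 1)) (G : C ⥤ T) [HasCoproduct fun n => G.obj (Y n)] :
    sigmaShift (fun n => G.map (u n)) ≫ sigmaComparison G Y =
      sigmaComparison G Y ≫ G.map (sigmaShift u) := by
  ext n
  simp [sigmaShift, ← Functor.map_comp]

variable [Preadditive T]

noncomputable def homShift (S : T) {Y : ℕ → T} (u : ∀ n, Y n ⟶ Y (n + 1)) :
    DirectSum ℕ (fun k => S ⟶ Y k) →+ DirectSum ℕ (fun k => S ⟶ Y k) :=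
  DirectSum.toAddMonoid fun k =>
    (DirectSum.of (fun k => S ⟶ Y k) (k + 1)).comp (Preadditive.rightComp S (u k))

variable {S : T} {Y : ℕ → T} (u : ∀ n, Y n ⟶ Y (n + 1))

lemma homShift_of (k : ℕ) (ψ : S ⟶ Y k) :
    homShift S u (DirectSum.of _ k ψ) = DirectSum.of (fun k => S ⟶ Y k) (k + 1) (ψ ≫ u k) := by
  simp [homShift, Preadditive.rightComp]

lemma homShift_apply_zero (x : DirectSum ℕ (fun k => S ⟶ Y k)) : homShift S u x 0 = 0 := by
  induction x using DirectSum.induction_on with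
  | zero => simp
  | of k ψ => rw [homShift_of, DirectSum.of_eq_of_ne _ _ _ (by omega)]
  | add x y hx hy => rw [map_add, DirectSum.add_apply, hx, hy, add_zero]

lemma homShift_apply_succ (x : DirectSum ℕ (fun k => S ⟶ Y k)) (k : ℕ) :
    homShift S u x (k + 1) = x k ≫ u k := by
  induction x using DirectSum.induction_on with
  | zero => simp
  | of i ψ =>
    rw [homShift_of]
    obtain rfl | hik := eq_or_ne i k
    · simp only [DirectSum.of_eq_same]
    · rw [DirectSum.of_eq_of_ne _ _ _ (by omega), DirectSum.of_eq_of_ne _ _ _ hik.symm, zero_comp]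
  | add x y hx hy =>
    rw [map_add, DirectSum.add_apply, DirectSum.add_apply, hx, hy, Preadditive.add_comp]

lemma eq_zero_of_eq_homShift {x : DirectSum ℕ (fun k => S ⟶ Y k)} (hx : x = homShift S u x) :
    x = 0 := by
  have h (k : ℕ) : x k = 0 := by
    induction k with
    | zero => rw [hx, homShift_apply_zero]
    | succ k ih => rw [hx, homShift_apply_succ, ih, zero_comp]
  exact DFinsupp.ext h

lemma apply_add_eq_comp_chainCompose {x : DirectSum ℕ (fun k => S ⟶ Y k)} {n : ℕ}
    {ψ : S ⟶ Y n} (hx : x - homShift S u x = DirectSum.of _ n ψ) (m : ℕ) :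
    x (n + m) = ψ ≫ chainCompose Y u n m := by
  have hcomp (k : ℕ) : x k = DirectSum.of (fun k => S ⟶ Y k) n ψ k + homShift S u x k := by
    rw [← hx, DirectSum.sub_apply, sub_add_cancel]
  have below (k : ℕ) (hk : k < n) : x k = 0 := by
    induction k with
    | zero => rw [hcomp, homShift_apply_zero, DirectSum.of_eq_of_ne _ _ _ (by omega), add_zero]
    | succ k ih =>
      rw [hcomp, homShift_apply_succ, ih (by omega), DirectSum.of_eq_of_ne _ _ _ (by omega),
        zero_comp, add_zero]
  induction m with
  | zero =>
    show x n = ψ ≫ 𝟙 _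
    rw [Category.comp_id, hcomp, DirectSum.of_eq_same]
    cases n with
    | zero => rw [homShift_apply_zero, add_zero]
    | succ n => rw [homShift_apply_succ, below n (by omega), zero_comp, add_zero]
  | succ m ih =>
    rw [chainCompose, ← Category.assoc, ← ih, ← homShift_apply_succ, hcomp,
      DirectSum.of_eq_of_ne _ _ _ (by omega), zero_add]
    rfl

variable [HasCoproduct Y]

lemma coproductComparisonHom_of (k : ℕ) (ψ : S ⟶ Y k) :
    coproductComparisonHom S Y (DirectSum.of _ k ψ) = ψ ≫ Sigma.ι Y k := by
  simp [coproductComparisonHom]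

lemma coproductComparisonHom_homShift (x : DirectSum ℕ (fun k => S ⟶ Y k)) :
    coproductComparisonHom S Y (homShift S u x) = coproductComparisonHom S Y x ≫ sigmaShift u := by
  induction x using DirectSum.induction_on with
  | zero => simp
  | of k ψ => simp [homShift_of, coproductComparisonHom_of, sigmaShift]
  | add x y hx hy => simp only [map_add, Preadditive.add_comp, hx, hy]

end SequenceShift

section Compact

variable {T : Type u} [Category.{v} T] [Preadditive T] [HasCoproducts.{0} T] {S : T}
  {Y : ℕ → T} {u : ∀ n, Y n ⟶ Y (n + 1)}

lemma eq_zero_of_comp_one_sub_sigmaShift (hS : IsCompactObject S) {β : S ⟶ ∐ Y}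
    (hβ : β ≫ (𝟙 _ - sigmaShift u) = 0) : β = 0 := by
  obtain ⟨x, rfl⟩ := (hS ℕ Y).2 β
  rw [Preadditive.comp_sub, Category.comp_id, sub_eq_zero,
    ← coproductComparisonHom_homShift] at hβ
  rw [eq_zero_of_eq_homShift u ((hS ℕ Y).1 hβ), map_zero]

lemma eq_zero_of_comp_map_one_sub_sigmaShift (hS : IsCompactObject S) {C : Type*} [Category C]
    [Preadditive C] {Z : ℕ → C} [HasCoproduct Z] {w : ∀ n, Z n ⟶ Z (n + 1)} (G : C ⥤ T)
    [G.Additive] [IsIso (sigmaComparison G Z)] {β : S ⟶ G.obj (∐ Z)}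
    (hβ : β ≫ G.map (𝟙 _ - sigmaShift w) = 0) : β = 0 := by
  have hcomm : (𝟙 _ - sigmaShift fun n => G.map (w n)) ≫ sigmaComparison G Z =
      sigmaComparison G Z ≫ G.map (𝟙 _ - sigmaShift w) := by
    rw [Preadditive.sub_comp, sigmaShift_comp_sigmaComparison, G.map_sub, G.map_id,
      Preadditive.comp_sub, Category.id_comp, Category.comp_id]
  have h := eq_zero_of_comp_one_sub_sigmaShift hS (u := fun n => G.map (w n))
    (β := β ≫ inv (sigmaComparison G Z)) <| by
    simp only [← cancel_mono (sigmaComparison G Z), Category.assoc, hcomm,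
      IsIso.inv_hom_id_assoc, hβ, zero_comp]
  simpa using h

lemma exists_eq_comp_ι_comp (hS : IsCompactObject S) {H : T} {g : ∐ Y ⟶ H}
    (hg : sigmaShift u ≫ g = g) (α : S ⟶ ∐ Y) :
    ∃ (n : ℕ) (ψ : S ⟶ Y n), α ≫ g = ψ ≫ Sigma.ι Y n ≫ g := by
  let P (n : ℕ) : AddSubgroup (S ⟶ H) := (Preadditive.rightComp S (Sigma.ι Y n ≫ g)).range
  have hP : Monotone P := monotone_nat_of_le_succ fun n => by
    rintro _ ⟨ψ, rfl⟩
    exact ⟨ψ ≫ u n, by simp [Preadditive.rightComp, ι_comp_eq_of_sigmaShift_comp u hg n]⟩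
  obtain ⟨x, rfl⟩ := (hS ℕ Y).2 α
  have hx : coproductComparisonHom S Y x ≫ g ∈ ⨆ n, P n := by
    induction x using DirectSum.induction_on with
    | zero => simp
    | of k ψ =>
      exact AddSubgroup.mem_iSup_of_mem k
        ⟨ψ, by simp [Preadditive.rightComp, coproductComparisonHom_of]⟩
    | add x y hx hy => simpa [Preadditive.add_comp] using AddSubgroup.add_mem _ hx hy
  obtain ⟨n, ψ, hψ⟩ := (AddSubgroup.mem_iSup_of_directed hP.directed_le).1 hx
  exact ⟨n, ψ, hψ.symm⟩

lemma exists_comp_chainCompose_eq_zero (hS : IsCompactObject S) {n : ℕ} {ψ : S ⟶ Y n}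
    {α : S ⟶ ∐ Y}
    (hα : ψ ≫ Sigma.ι Y n = α ≫ (𝟙 _ - sigmaShift u)) :
    ∃ m, ψ ≫ chainCompose Y u n m = 0 := by
  obtain ⟨x, rfl⟩ := (hS ℕ Y).2 α
  have hx : x - homShift S u x = DirectSum.of _ n ψ := (hS ℕ Y).1 <| by
    rw [map_sub, coproductComparisonHom_of, coproductComparisonHom_homShift, hα,
      Preadditive.comp_sub, Category.comp_id]
  obtain ⟨m, hm⟩ := (DFinsupp.finite_support x).bddAbove
  refine ⟨m + 1, ?_⟩
  rw [← apply_add_eq_comp_chainCompose u hx]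
  by_contra h
  have := hm h
  omega

end Compact

/-- Let `T` be a triangulated category with countable coproducts, `S` a compact object,
and `X⁰ → X¹ → ⋯` a sequence with homotopy colimit `H`, given by a distinguished
triangle `∐ₙ Xⁿ →^{1 - Sh} ∐ₙ Xⁿ →^{g} H → Σ ∐ₙ Xⁿ`.  Then the canonical map
`colimₙ Hom(S, Xⁿ) → Hom(S, H)` is an isomorphism: every `S ⟶ H` factors through some
`Xⁿ`, and any `S ⟶ Xⁿ` which dies in `H` dies in some `X^{n+m}`. -/
theorem compact_hom_hocolim {T : Type u} [Category.{v} T] [Preadditive T]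
    [HasZeroObject T] [HasShift T ℤ] [∀ n : ℤ, (shiftFunctor T n).Additive]
    [Pretriangulated T] [HasCoproducts.{0} T]
    (S : T) (hS : IsCompactObject S)
    (X : ℕ → T) (f : ∀ n, X n ⟶ X (n + 1))
    (H : T) (g : (∐ X) ⟶ H) (h : H ⟶ (∐ X)⟦(1 : ℤ)⟧)
    (hT : Triangle.mk (𝟙 (∐ X) - Sigma.desc (fun n => f n ≫ Sigma.ι X (n + 1))) g h ∈
      distTriang T) :
    (∀ φ : S ⟶ H, ∃ (n : ℕ) (ψ : S ⟶ X n), φ = ψ ≫ Sigma.ι X n ≫ g) ∧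
    (∀ (n : ℕ) (ψ : S ⟶ X n), ψ ≫ Sigma.ι X n ≫ g = 0 →
      ∃ m : ℕ, ψ ≫ chainCompose X f n m = 0) := by
  have hg : sigmaShift f ≫ g = g := by
    have h₁₂ : (𝟙 _ - sigmaShift f) ≫ g = 0 := comp_distTriang_mor_zero₁₂ _ hT
    rwa [Preadditive.sub_comp, Category.id_comp, sub_eq_zero, eq_comm] at h₁₂
  refine ⟨fun φ => ?_, fun n ψ hψ => ?_⟩
  · have h₃₁ : h ≫ (shiftFunctor T (1 : ℤ)).map (𝟙 _ - sigmaShift f) = 0 :=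
      comp_distTriang_mor_zero₃₁ _ hT
    have hφ : φ ≫ h = 0 := eq_zero_of_comp_map_one_sub_sigmaShift hS (shiftFunctor T (1 : ℤ))
      (by rw [Category.assoc, h₃₁, comp_zero])
    obtain ⟨α, rfl⟩ := Triangle.coyoneda_exact₃ _ hT φ hφ
    exact exists_eq_comp_ι_comp hS hg α
  · obtain ⟨α, hα⟩ := Triangle.coyoneda_exact₂ _ hT (ψ ≫ Sigma.ι X n)
      ((Category.assoc _ _ _).trans hψ)
    exact exists_comp_chainCompose_eq_zero hS hα
end
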